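/- arXiv:2406.04704 — 7 statements merged into one kernel-verified Lean document; each statement's English description precedes it below -/
import Mathlib

section
/- Let G be a finite group, H a subgroup of G, and N a normal subgroup of G with N ≤ H. Then H is n-modularly embedded in G if and only if H/N is n-modularly embedded in G/N. -/
open Pointwise

/-- A subgroup `H` of `K` is `n`-modularly embedded in `K` if either `H ◁ K`, or
`K/Core_K(H)` is a non-nilpotent group of order `p * q ^ n` with `|K : H| = p`
for some primes `p`, `q`. -/
def ModularlyEmbedded {G : Type*} [Group G] (n : ℕ) (H K : Subgroup G) : Prop :=
  H ≤ K ∧ ((H.subgroupOf K).Normal ∨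
    ∃ p q : ℕ, p.Prime ∧ q.Prime ∧
      ¬ Group.IsNilpotent (↥K ⧸ (H.subgroupOf K).normalCore) ∧
      Nat.card (↥K ⧸ (H.subgroupOf K).normalCore) = p * q ^ n ∧
      (H.subgroupOf K).index = p)

/-- `H` is `k`-submodular in `K` if there is a chain `H = H_0 ≤ H_1 ≤ ⋯ ≤ H_m = K`
such that `H_{i-1}` is `n_i`-modularly embedded in `H_i` for some natural number
`n_i ≤ k`, for every `i`. -/
def KSubmodularIn {G : Type*} [Group G] (k : ℕ) (H K : Subgroup G) : Prop :=
  ∃ (m : ℕ) (c : ℕ → Subgroup G), c 0 = H ∧ c m = K ∧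
    ∀ i < m, ∃ n : ℕ, 0 < n ∧ n ≤ k ∧ ModularlyEmbedded n (c i) (c (i + 1))

lemma normalCore_map_of_surjective' {G G' : Type*} [Group G] [Group G']
    {f : G →* G'} (hf : Function.Surjective f) {H : Subgroup G} (hker : f.ker ≤ H) :
    (H.map f).normalCore = H.normalCore.map f := by
  apply le_antisymm
  · haveI h2 : ((H.map f).normalCore.comap f).Normal :=
      (Subgroup.normalCore_normal _).comap f
    have h1 : (H.map f).normalCore.comap f ≤ H := by
      refine le_trans (Subgroup.comap_mono ((H.map f).normalCore_le)) ?_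
      rw [Subgroup.comap_map_eq, sup_of_le_left hker]
    have h3 : (H.map f).normalCore.comap f ≤ H.normalCore :=
      Subgroup.normal_le_normalCore.mpr h1
    calc (H.map f).normalCore = ((H.map f).normalCore.comap f).map f :=
        (Subgroup.map_comap_eq_self_of_surjective hf _).symm
      _ ≤ H.normalCore.map f := Subgroup.map_mono h3
  · haveI : (H.normalCore.map f).Normal := (Subgroup.normalCore_normal H).map f hf
    exact Subgroup.normal_le_normalCore.mpr (Subgroup.map_mono (H.normalCore_le))

lemma normal_map_iff' {G G' : Type*} [Group G] [Group G']
    {f : G →* G'} (hf : Function.Surjective f) {H : Subgroup G} (hker : f.ker ≤ H) :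
    (H.map f).Normal ↔ H.Normal := by
  constructor
  · intro h
    have := h.comap f
    rwa [Subgroup.comap_map_eq, sup_of_le_left hker] at this
  · exact fun h => h.map f hf

lemma map_topEquiv_subgroupOf' {G : Type*} [Group G] (A : Subgroup G) :
    (A.subgroupOf ⊤).map (Subgroup.topEquiv (G := G)).toMonoidHom = A := by
  have : (Subgroup.topEquiv (G := G)).toMonoidHom = (⊤ : Subgroup G).subtype := rfl
  rw [this, Subgroup.subgroupOf_map_subtype, inf_top_eq]

lemma modularlyEmbedded_top_iff' {G : Type*} [Group G] (n : ℕ) (A : Subgroup G) :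
    ModularlyEmbedded n A ⊤ ↔ (A.Normal ∨
      ∃ p q : ℕ, p.Prime ∧ q.Prime ∧
        ¬ Group.IsNilpotent (G ⧸ A.normalCore) ∧
        Nat.card (G ⧸ A.normalCore) = p * q ^ n ∧ A.index = p) := by
  have hker : (Subgroup.topEquiv (G := G)).toMonoidHom.ker ≤ A.subgroupOf ⊤ := by
    rw [(MonoidHom.ker_eq_bot_iff _).mpr Subgroup.topEquiv.injective]
    exact bot_le
  have hmap : ((A.subgroupOf ⊤).normalCore).map (Subgroup.topEquiv (G := G)).toMonoidHom
      = A.normalCore := by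
    rw [← normalCore_map_of_surjective' Subgroup.topEquiv.surjective hker,
      map_topEquiv_subgroupOf']
  have e : (↥(⊤ : Subgroup G) ⧸ (A.subgroupOf ⊤).normalCore) ≃* (G ⧸ A.normalCore) :=
    QuotientGroup.congr _ _ Subgroup.topEquiv hmap
  have h1 : (A.subgroupOf ⊤).Normal ↔ A.Normal := by
    conv_rhs => rw [← map_topEquiv_subgroupOf' A]
    exact (normal_map_iff' Subgroup.topEquiv.surjective hker).symm
  have h2 : (A.subgroupOf ⊤).index = A.index := A.relIndex_top_right
  have h3 : Group.IsNilpotent (↥(⊤ : Subgroup G) ⧸ (A.subgroupOf ⊤).normalCore) ↔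
      Group.IsNilpotent (G ⧸ A.normalCore) := Group.isNilpotent_congr e
  have h4 : Nat.card (↥(⊤ : Subgroup G) ⧸ (A.subgroupOf ⊤).normalCore) =
      Nat.card (G ⧸ A.normalCore) := Nat.card_congr e.toEquiv
  unfold ModularlyEmbedded
  rw [and_iff_right le_top, h1, h2, h3, h4]

/-- Lemma 3.1: for `N` normal in `G` with `N ≤ H`, the subgroup `H` is
`n`-modularly embedded in `G` iff `H/N` is `n`-modularly embedded in `G/N`. -/
theorem nModularlyEmbedded_iff_quotient {G : Type*} [Group G] [Finite G]
    (n : ℕ) (H N : Subgroup G) [N.Normal] (hNH : N ≤ H) :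
    ModularlyEmbedded n H ⊤ ↔
      ModularlyEmbedded n (H.map (QuotientGroup.mk' N)) ⊤ := by
  have hs : Function.Surjective (QuotientGroup.mk' N) := QuotientGroup.mk'_surjective N
  have hkH : (QuotientGroup.mk' N).ker ≤ H := by
    rw [QuotientGroup.ker_mk']; exact hNH
  have hNcore : N ≤ H.normalCore := Subgroup.normal_le_normalCore.mpr hNH
  have e : ((G ⧸ N) ⧸ (H.normalCore.map (QuotientGroup.mk' N))) ≃* (G ⧸ H.normalCore) :=
    QuotientGroup.quotientQuotientEquivQuotient N H.normalCore hNcore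
  have hidx : (H.map (QuotientGroup.mk' N)).index = H.index := by
    rw [Subgroup.index_map, sup_of_le_left hkH,
      (QuotientGroup.mk' N).range_eq_top_of_surjective hs, Subgroup.index_top, mul_one]
  have hcore := normalCore_map_of_surjective' hs hkH
  have e2 : ((G ⧸ N) ⧸ (H.map (QuotientGroup.mk' N)).normalCore) ≃* (G ⧸ H.normalCore) :=
    (QuotientGroup.quotientMulEquivOfEq hcore).trans e
  rw [modularlyEmbedded_top_iff', modularlyEmbedded_top_iff']
  refine or_congr (normal_map_iff' hs hkH).symm (exists₂_congr fun p q => ?_)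
  rw [hidx, Group.isNilpotent_congr e2, Nat.card_congr e2.toEquiv]
end

section
/- If M is a maximal subgroup of a finite group G and M is k-submodular in G, then M is P-subnormal in G, i.e., |G:M| is prime. -/
open Pointwise

lemma aux_index_prime_of_normal_coatom {G : Type*} [Group G] [Finite G]
    {M : Subgroup G} (hN : M.Normal) (hmax : IsCoatom M) : M.index.Prime := by
  let f := QuotientGroup.mk' M
  have hsurj : Function.Surjective f := QuotientGroup.mk'_surjective M
  have htriv : ∀ K : Subgroup (G ⧸ M), K = ⊥ ∨ K = ⊤ := by
    intro K
    have hle : M ≤ K.comap f := by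
      intro x hx
      simp only [Subgroup.mem_comap]
      have : f x = 1 := by
        rwa [← QuotientGroup.ker_mk' M, MonoidHom.mem_ker] at hx
      rw [this]; exact K.one_mem
    rcases eq_or_lt_of_le hle with h | h
    · left
      have : K = (K.comap f).map f := (Subgroup.map_comap_eq_self_of_surjective hsurj K).symm
      rw [this, ← h, Subgroup.map_eq_bot_iff, QuotientGroup.ker_mk']
    · right
      have h2 := hmax.2 _ h
      have : K = (K.comap f).map f := (Subgroup.map_comap_eq_self_of_surjective hsurj K).symm
      rw [this, h2, Subgroup.map_top_of_surjective f hsurj]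
  have hnt : Nontrivial (G ⧸ M) := by
    rcases subsingleton_or_nontrivial (G ⧸ M) with h | h
    · exfalso
      apply hmax.1
      rw [eq_top_iff]
      intro x _
      have : f x = f 1 := Subsingleton.elim _ _
      have := (QuotientGroup.eq (s := M) (a := x) (b := 1)).mp this
      simpa using this
    · exact h
  have hcyc : IsCyclic (G ⧸ M) := by
    obtain ⟨g, hg⟩ := exists_ne (1 : G ⧸ M)
    refine ⟨⟨g, fun x => ?_⟩⟩
    show x ∈ Subgroup.zpowers g
    rcases htriv (Subgroup.zpowers g) with h | h
    · exact absurd (Subgroup.mem_bot.mp (h ▸ Subgroup.mem_zpowers g)) hg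
    · rw [h]; trivial
  letI : CommGroup (G ⧸ M) := IsCyclic.commGroup
  haveI : IsSimpleGroup (G ⧸ M) := ⟨fun K _ => htriv K⟩
  have := IsSimpleGroup.prime_card (α := G ⧸ M)
  rwa [Subgroup.index]

/-- Lemma 3.3(2): a `k`-submodular maximal subgroup has prime index,
i.e. it is `ℙ`-subnormal. -/
theorem index_prime_of_maximal_kSubmodular {G : Type*} [Group G] [Finite G]
    {k : ℕ} (hk : 0 < k) {M : Subgroup G} (hmax : IsCoatom M)
    (hsub : KSubmodularIn k M ⊤) : M.index.Prime := by
  obtain ⟨m, c, h0, hm, hc⟩ := hsub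
  induction m generalizing c with
  | zero => exact absurd (h0 ▸ hm : M = ⊤) hmax.1
  | succ m ih =>
    by_cases htop : c m = ⊤
    · exact ih c h0 htop (fun i hi => hc i (Nat.lt_succ_of_lt hi))
    · have mono : ∀ i, i ≤ m + 1 → c 0 ≤ c i := by
        intro i
        induction i with
        | zero => intro _; exact le_rfl
        | succ j ihj =>
          intro hj
          obtain ⟨n, _, _, hle, _⟩ := hc j (by omega)
          exact (ihj (by omega)).trans hle
      have hMcm : M ≤ c m := h0 ▸ mono m (by omega)
      have hcmM : c m = M := by
        rcases eq_or_lt_of_le hMcm with h | h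
        · exact h.symm
        · exact absurd (hmax.2 _ h) htop
      obtain ⟨n, _, _, _, hor⟩ := hc m (Nat.lt_succ_self m)
      rw [hcmM, hm] at hor
      rcases hor with hN | ⟨p, q, hp, _, _, _, hidx⟩
      · have : M.Normal := by
          constructor
          intro x hx g
          have := hN.conj_mem ⟨x, trivial⟩ (by simpa [Subgroup.mem_subgroupOf] using hx)
            ⟨g, trivial⟩
          simpa [Subgroup.mem_subgroupOf] using this
        exact aux_index_prime_of_normal_coatom this hmax
      · have : M.index = p := by
          rw [← Subgroup.relIndex_top_right]
          exact hidx
        rw [this]; exact hp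
end

section
/- Let H and U be k-submodular subgroups of a finite group G. Then H ∩ U is k-submodular in G. -/
open Pointwise

section Aux

variable {G : Type*} [Group G]

lemma subgroupOf_normal_of_conj {A B : Subgroup G} 
    (h : ∀ a ∈ A, ∀ b ∈ B, b * a * b⁻¹ ∈ A) : (A.subgroupOf B).Normal := by
  constructor
  intro x hx g
  simp only [Subgroup.mem_subgroupOf] at *
  simpa using h _ hx _ g.2

lemma ksub_single {k n : ℕ} (hn : 0 < n) (hnk : n ≤ k) {A B : Subgroup G}
    (h : ModularlyEmbedded n A B) : KSubmodularIn k A B := by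
  refine ⟨1, fun i => if i = 0 then A else B, if_pos rfl, if_neg one_ne_zero, ?_⟩
  intro i hi
  interval_cases i
  exact ⟨n, hn, hnk, by simpa using h⟩

lemma KSubmodularIn.trans {k : ℕ} {A B C : Subgroup G} (h1 : KSubmodularIn k A B)
    (h2 : KSubmodularIn k B C) : KSubmodularIn k A C := by
  obtain ⟨m1, c1, hc10, hc1m, hs1⟩ := h1
  obtain ⟨m2, c2, hc20, hc2m, hs2⟩ := h2
  refine ⟨m1 + m2, fun i => if i < m1 then c1 i else c2 (i - m1), ?_, ?_, ?_⟩
  · by_cases h : 0 < m1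
    · simpa [h] using hc10
    · have : m1 = 0 := by omega
      subst this
      simpa [hc20, ← hc10] using hc1m.symm
  · have : ¬ (m1 + m2 < m1) := by omega
    simpa [this] using hc2m
  · intro i hi
    rcases lt_or_ge (i + 1) m1 with h | h
    · have hi1 : i < m1 := by omega
      simpa [hi1, h] using hs1 i hi1
    · rcases eq_or_lt_of_le h with h1 | h1
      · subst h1
        obtain ⟨n, hn1, hn2, hme⟩ := hs1 i (by omega)
        refine ⟨n, hn1, hn2, ?_⟩
        rw [hc1m] at hme
        simpa [hc20] using hme
      · have h2i : ¬ (i < m1) := by omega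
        have h2i1 : ¬ (i + 1 < m1) := by omega
        obtain ⟨n, hn1, hn2, hme⟩ := hs2 (i - m1) (by omega)
        refine ⟨n, hn1, hn2, ?_⟩
        simp only [h2i, if_neg, h2i1]
        have : i + 1 - m1 = i - m1 + 1 := by omega
        rwa [this]

end Aux

lemma exists_normalizer_iterate_top {Ω : Type*} [Group Ω] [Finite Ω]
    (hnc : NormalizerCondition Ω) (S : Subgroup Ω) :
    ∃ m, (fun T : Subgroup Ω => Subgroup.normalizer (T : Set Ω))^[m] S = ⊤ := by
  have key : ∀ j, (fun T : Subgroup Ω => Subgroup.normalizer (T : Set Ω))^[j] S = ⊤ ∨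
      j + Nat.card S ≤ Nat.card ((fun T : Subgroup Ω => Subgroup.normalizer (T : Set Ω))^[j] S) := by
    intro j
    induction j with
    | zero => right; simp
    | succ j ih =>
      by_cases htop : (fun T : Subgroup Ω => Subgroup.normalizer (T : Set Ω))^[j] S = ⊤
      · left
        rw [Function.iterate_succ_apply', htop]
        exact eq_top_iff.mpr Subgroup.le_normalizer
      · right
        have h := ih.resolve_left htop
        have hlt : (fun T : Subgroup Ω => Subgroup.normalizer (T : Set Ω))^[j] S < Subgroup.normalizer (((fun T : Subgroup Ω => Subgroup.normalizer (T : Set Ω))^[j] S : Subgroup Ω) : Set Ω) :=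
          hnc _ (lt_top_iff_ne_top.mpr htop)
        have hle := Subgroup.card_le_of_le hlt.le
        have hstrict : Nat.card ((fun T : Subgroup Ω => Subgroup.normalizer (T : Set Ω))^[j] S) <
            Nat.card (Subgroup.normalizer (((fun T : Subgroup Ω => Subgroup.normalizer (T : Set Ω))^[j] S : Subgroup Ω) : Set Ω)) := by
          rcases lt_or_eq_of_le hle with h' | h'
          · exact h'
          · exact absurd (Subgroup.eq_of_le_of_card_ge hlt.le h'.ge) hlt.ne
        rw [Function.iterate_succ_apply']
        omega
  rcases key (Nat.card Ω) with h | h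
  · exact ⟨Nat.card Ω, h⟩
  · exfalso
    have h1 : Nat.card ((fun T : Subgroup Ω => Subgroup.normalizer (T : Set Ω))^[Nat.card Ω] S) ≤ Nat.card Ω :=
      Subgroup.card_le_card_group _
    have h2 : 0 < Nat.card S := Nat.card_pos
    omega

/-- If there is a hom from `X` to a nilpotent (finite) group whose kernel is inside
`A`, then `A` is `k`-submodular in `X` (it is in fact subnormal). -/
lemma kSubmodularIn_of_nilpotent {G : Type*} [Group G] [Finite G] {k : ℕ} (hk : 0 < k)
    {A X : Subgroup G} (hAX : A ≤ X) {Ω : Type*} [Group Ω] [Finite Ω]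
    (f : ↥X →* Ω) (hker : f.ker ≤ A.subgroupOf X) (hnil : Group.IsNilpotent Ω) :
    KSubmodularIn k A X := by
  obtain ⟨m, hm⟩ := exists_normalizer_iterate_top normalizerCondition_of_isNilpotent
    ((A.subgroupOf X).map f)
  refine ⟨m, fun i => (((fun T : Subgroup Ω => Subgroup.normalizer (T : Set Ω))^[i] ((A.subgroupOf X).map f)).comap f).map
    X.subtype, ?_, ?_, ?_⟩
  · simp only [Function.iterate_zero_apply]
    rw [Subgroup.comap_map_eq, sup_eq_left.mpr hker]
    rw [Subgroup.subgroupOf_map_subtype, inf_eq_left.mpr hAX]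
  · dsimp only
    rw [hm, Subgroup.comap_top, ← MonoidHom.range_eq_map, Subgroup.range_subtype]
  · intro i hi
    refine ⟨k, hk, le_rfl, ?_, Or.inl ?_⟩
    · dsimp only
      rw [Function.iterate_succ_apply']
      exact Subgroup.map_mono (Subgroup.comap_mono Subgroup.le_normalizer)
    · apply subgroupOf_normal_of_conj
      intro a ha b hb
      rw [Subgroup.mem_map] at ha hb ⊢
      obtain ⟨a', ha', rfl⟩ := ha
      obtain ⟨b', hb', rfl⟩ := hb
      refine ⟨b' * a' * b'⁻¹, ?_, by simp⟩
      rw [Subgroup.mem_comap] at ha' hb' ⊢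
      rw [Function.iterate_succ_apply'] at hb'
      simp only [map_mul, map_inv]
      exact (Subgroup.mem_normalizer_iff.mp hb' (f a')).mp ha'

lemma step_lemma {G : Type*} [Group G] [Finite G] {k n : ℕ} (hk : 0 < k) (hnk : n ≤ k)
    {H K L : Subgroup G} (hme : ModularlyEmbedded n H K) (hLK : L ≤ K) :
    KSubmodularIn k (H ⊓ L) L := by
  obtain ⟨hHK, hcase⟩ := hme
  rcases hcase with hnorm | ⟨p, q, hp, hq, hnonnil, hcard, hidx⟩
  · -- normal case : H ⊓ L is normal in L
    refine ksub_single hk le_rfl ⟨inf_le_right, Or.inl ?_⟩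
    apply subgroupOf_normal_of_conj
    intro a ha b hb
    constructor
    · have h1 : (⟨a, hHK ha.1⟩ : ↥K) ∈ H.subgroupOf K := Subgroup.mem_subgroupOf.mpr ha.1
      have := hnorm.conj_mem _ h1 ⟨b, hLK hb⟩
      simpa [Subgroup.mem_subgroupOf] using this
    · exact L.mul_mem (L.mul_mem hb ha.2) (L.inv_mem hb)
  · -- non-nilpotent case
    haveI hfp : Fact p.Prime := ⟨hp⟩
    haveI hfq : Fact q.Prime := ⟨hq⟩
    set N := (H.subgroupOf K).normalCore with hNdef
    -- p ≠ q
    have hpq : p ≠ q := by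
      rintro rfl
      exact hnonnil ((IsPGroup.of_card (n := n + 1)
        (by rw [hcard, pow_succ'])).isNilpotent)
    set P := N.map K.subtype with hPdef
    have hPH : P ≤ H := by
      calc P ≤ (H.subgroupOf K).map K.subtype :=
            Subgroup.map_mono (Subgroup.normalCore_le _)
        _ = H ⊓ K := Subgroup.subgroupOf_map_subtype _ _
        _ ≤ H := inf_le_left
    have hPconj : ∀ g ∈ K, ∀ x ∈ P, g * x * g⁻¹ ∈ P := by
      intro g hg x hx
      rw [Subgroup.mem_map] at hx ⊢
      obtain ⟨x', hx', rfl⟩ := hx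
      exact ⟨⟨g, hg⟩ * x' * ⟨g, hg⟩⁻¹,
        (Subgroup.normalCore_normal (H.subgroupOf K)).conj_mem x' hx' ⟨g, hg⟩, by simp⟩
    set B' : Subgroup ↥L := P.subgroupOf L with hB'def
    haveI hB'n : B'.Normal := by
      constructor
      intro x hx g
      rw [Subgroup.mem_subgroupOf] at hx ⊢
      simpa using hPconj g (hLK g.2) x hx
    set ρ : ↥L →* ↥K ⧸ N := (QuotientGroup.mk' N).comp (Subgroup.inclusion hLK) with hρdef
    have hkerρ : ρ.ker = B' := by
      ext x
      constructor
      · intro hx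
        have hxN : Subgroup.inclusion hLK x ∈ N := by
          have : Subgroup.inclusion hLK x ∈ (QuotientGroup.mk' N).ker := hx
          rwa [QuotientGroup.ker_mk'] at this
        exact Subgroup.mem_subgroupOf.mpr ⟨_, hxN, rfl⟩
      · intro hx
        obtain ⟨y, hy, hyx⟩ := Subgroup.mem_map.mp (Subgroup.mem_subgroupOf.mp hx)
        have hyeq : y = Subgroup.inclusion hLK x := Subtype.ext hyx
        show Subgroup.inclusion hLK x ∈ (QuotientGroup.mk' N).ker
        rw [QuotientGroup.ker_mk']
        exact hyeq ▸ hy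
    -- |L / B'| divides p * q ^ n
    have hcardLB : Nat.card (↥L ⧸ B') ∣ p * q ^ n := by
      rw [← hcard]
      exact Subgroup.card_dvd_of_injective
        ((QuotientGroup.kerLift ρ).comp
          (QuotientGroup.quotientMulEquivOfEq hkerρ).symm.toMonoidHom)
        ((QuotientGroup.kerLift_injective ρ).comp (MulEquiv.injective _))
    -- the image of H in K/N has order q^n
    set Hbar := (H.subgroupOf K).map (QuotientGroup.mk' N) with hHbardef
    have hHbaridx : Hbar.index = p := by
      rw [hHbardef, Subgroup.index_map, QuotientGroup.ker_mk',
        sup_eq_left.mpr (Subgroup.normalCore_le _),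
        MonoidHom.range_eq_top.mpr (QuotientGroup.mk'_surjective N), Subgroup.index_top,
        mul_one, hidx]
    have hHbarcard : Nat.card Hbar = q ^ n := by
      have hmi := Subgroup.card_mul_index Hbar
      rw [hHbaridx, hcard, mul_comm p (q ^ n)] at hmi
      exact Nat.eq_of_mul_eq_mul_right hp.pos hmi
    -- the image T of H ⊓ L in L/B' is a q-group
    set T := ((H ⊓ L).subgroupOf L).map (QuotientGroup.mk' B') with hTdef
    have hTmem : ∀ t : ↥L ⧸ B', t ∈ T →
        (QuotientGroup.kerLift ρ) ((QuotientGroup.quotientMulEquivOfEq hkerρ).symm t) ∈ Hbar := by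
      intro t ht
      obtain ⟨x, hx, rfl⟩ := Subgroup.mem_map.mp ht
      have h1 : (QuotientGroup.quotientMulEquivOfEq hkerρ).symm (QuotientGroup.mk' B' x)
          = QuotientGroup.mk (s := ρ.ker) x := by
        apply (QuotientGroup.quotientMulEquivOfEq hkerρ).injective
        simp [QuotientGroup.quotientMulEquivOfEq_mk]
      rw [h1, QuotientGroup.kerLift_mk]
      exact Subgroup.mem_map.mpr ⟨Subgroup.inclusion hLK x,
        Subgroup.mem_subgroupOf.mpr hx.1, rfl⟩
    have hTcard : Nat.card ↥T ∣ q ^ n := by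
      rw [← hHbarcard]
      refine Subgroup.card_dvd_of_injective
        (((QuotientGroup.kerLift ρ).comp
          ((QuotientGroup.quotientMulEquivOfEq hkerρ).symm.toMonoidHom.comp T.subtype)).codRestrict
          Hbar (fun t => hTmem ↑t t.2)) ?_
      intro a b hab
      apply Subtype.ext
      apply (QuotientGroup.quotientMulEquivOfEq hkerρ).symm.injective
      apply QuotientGroup.kerLift_injective ρ
      exact congrArg Subtype.val hab
    obtain ⟨j, hjn, hTj⟩ := (Nat.dvd_prime_pow hq).mp hTcard
    have hTpgrp : IsPGroup q ↥T := IsPGroup.of_card hTj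
    obtain ⟨Qbar, hTQbar⟩ := hTpgrp.exists_le_sylow
    set X' : Subgroup ↥L := (Qbar : Subgroup (↥L ⧸ B')).comap (QuotientGroup.mk' B') with hX'def
    set X : Subgroup G := X'.map L.subtype with hXdef
    have hXL : X ≤ L := Subgroup.map_subtype_le _
    have hXsub : X.subgroupOf L = X' :=
      Subgroup.comap_map_eq_self_of_injective L.subtype_injective X'
    have hHLX : H ⊓ L ≤ X := by
      intro x hx
      refine Subgroup.mem_map.mpr ⟨⟨x, hx.2⟩, ?_, rfl⟩
      refine Subgroup.mem_comap.mpr (hTQbar ?_)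
      exact Subgroup.mem_map.mpr ⟨⟨x, hx.2⟩, Subgroup.mem_subgroupOf.mpr hx, rfl⟩
    have hB'X' : B' ≤ X' := by
      intro x hx
      refine Subgroup.mem_comap.mpr ?_
      have : QuotientGroup.mk' B' x = 1 := (QuotientGroup.eq_one_iff x).mpr hx
      rw [this]
      exact one_mem _
    -- first leg : H ⊓ L is k-submodular in X
    have hf₀mem : ∀ x : ↥X, ((QuotientGroup.mk' B').comp (Subgroup.inclusion hXL)) x
        ∈ (Qbar : Subgroup (↥L ⧸ B')) := by
      intro x
      obtain ⟨x', hx', hxx⟩ := Subgroup.mem_map.mp x.2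
      have : Subgroup.inclusion hXL x = x' := Subtype.ext (by
        rw [Subgroup.coe_inclusion]
        exact hxx.symm)
      rw [MonoidHom.comp_apply, this]
      exact Subgroup.mem_comap.mp hx'
    set f₁ : ↥X →* ↥(Qbar : Subgroup (↥L ⧸ B')) :=
      ((QuotientGroup.mk' B').comp (Subgroup.inclusion hXL)).codRestrict _ hf₀mem with hf₁def
    have hker₁ : f₁.ker ≤ (H ⊓ L).subgroupOf X := by
      intro x hx
      have h0 : ((QuotientGroup.mk' B').comp (Subgroup.inclusion hXL)) x = 1 :=
        congrArg Subtype.val hx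
      have hxB : Subgroup.inclusion hXL x ∈ B' := (QuotientGroup.eq_one_iff _).mp h0
      have hxP : (↑x : G) ∈ P := Subgroup.mem_subgroupOf.mp hxB
      exact Subgroup.mem_subgroupOf.mpr ⟨hPH hxP, hXL x.2⟩
    have S1 : KSubmodularIn k (H ⊓ L) X :=
      kSubmodularIn_of_nilpotent hk hHLX f₁ hker₁ (Qbar.isPGroup'.isNilpotent)
    -- second leg : X is k-submodular in L
    set C := (X.subgroupOf L).normalCore with hCdef
    have hCle : C ≤ X.subgroupOf L := Subgroup.normalCore_le _
    by_cases hNil : Group.IsNilpotent (↥L ⧸ C)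
    · refine S1.trans (kSubmodularIn_of_nilpotent hk hXL (QuotientGroup.mk' C) ?_ hNil)
      rw [QuotientGroup.ker_mk']
      exact hCle
    · -- X is modularly embedded in L
      have hB'C : B' ≤ C := Subgroup.normal_le_normalCore.mpr (hXsub ▸ hB'X')
      have hCdvd : C.index ∣ p * q ^ n :=
        dvd_trans (Subgroup.index_dvd_of_le hB'C) (Subgroup.index_eq_card B' ▸ hcardLB)
      have hCcard : Nat.card (↥L ⧸ C) = C.index := (Subgroup.index_eq_card C).symm
      have hpC : p ∣ C.index := by
        by_contra hpnd
        have hcop : Nat.Coprime C.index p :=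
          Nat.coprime_comm.mp ((Nat.Prime.coprime_iff_not_dvd hp).mpr hpnd)
        have hdq : C.index ∣ q ^ n := hcop.dvd_of_dvd_mul_right (by rwa [mul_comm] at hCdvd)
        obtain ⟨b, _, hbe⟩ := (Nat.dvd_prime_pow hq).mp hdq
        exact hNil ((IsPGroup.of_card (n := b) (by rw [hCcard, hbe])).isNilpotent)
      obtain ⟨e, he⟩ := hpC
      have heq : e ∣ q ^ n := by
        have h2 := hCdvd
        rw [he] at h2
        exact (mul_dvd_mul_iff_left (a := p) hp.ne_zero).mp h2
      obtain ⟨m, hmn, hme⟩ := (Nat.dvd_prime_pow hq).mp heq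
      have hm1 : 0 < m := by
        rcases Nat.eq_zero_or_pos m with h0 | h0
        · exfalso
          apply hNil
          refine (IsPGroup.of_card (p := p) (n := 1) ?_).isNilpotent
          rw [hCcard, he, hme, h0, pow_zero, mul_one, pow_one]
        · exact h0
      have hXidx : (X.subgroupOf L).index = p := by
        rw [hXsub]
        have hX'i : X'.index = (Qbar : Subgroup (↥L ⧸ B')).index :=
          Subgroup.index_comap_of_surjective _ (QuotientGroup.mk'_surjective B')
        have hqnd : ¬ q ∣ X'.index := by rw [hX'i]; exact Qbar.not_dvd_index
        have hdvd2 : X'.index ∣ p * q ^ m := by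
          have h3 : X'.index ∣ C.index := Subgroup.index_dvd_of_le (hXsub ▸ hCle)
          rwa [he, hme] at h3
        have hcop : Nat.Coprime X'.index (q ^ m) :=
          (((Nat.Prime.coprime_iff_not_dvd hq).mpr hqnd).symm).pow_right m
        have hdp : X'.index ∣ p := hcop.dvd_of_dvd_mul_right hdvd2
        rcases (Nat.Prime.eq_one_or_self_of_dvd hp _ hdp) with h1 | h1
        · exfalso
          have hX'top : X' = ⊤ := Subgroup.index_eq_one.mp h1
          have hCtop : C = ⊤ := by
            rw [hCdef, hXsub, hX'top]
            exact Subgroup.normalCore_eq_self ⊤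
          have hsub : Subsingleton (↥L ⧸ C) := by
            rw [hCtop]
            exact QuotientGroup.subsingleton_quotient_top
          exact hNil (@Group.isNilpotent_of_subsingleton _ _ hsub)
        · exact h1
      refine S1.trans (ksub_single hm1 (le_trans hmn hnk)
        ⟨hXL, Or.inr ⟨p, q, hp, hq, hNil, ?_, hXidx⟩⟩)
      rw [hCcard, he, hme]

lemma kSubmodularIn_refl {G : Type*} [Group G] {k : ℕ} (A : Subgroup G) :
    KSubmodularIn k A A :=
  ⟨0, fun _ => A, rfl, rfl, fun i hi => absurd hi (by omega)⟩

/-- Lemma 3.5(2): the intersection of two `k`-submodular subgroups is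
`k`-submodular. -/
theorem kSubmodularIn_inf {G : Type*} [Group G] [Finite G]
    {k : ℕ} (hk : 0 < k) {H U : Subgroup G}
    (hH : KSubmodularIn k H ⊤) (hU : KSubmodularIn k U ⊤) :
    KSubmodularIn k (H ⊓ U) ⊤ := by
  obtain ⟨m, c, hc0, hcm, hs⟩ := hH
  have key : ∀ j, j ≤ m → KSubmodularIn k (H ⊓ U) (c j ⊓ U) := by
    intro j
    induction j with
    | zero => intro _; rw [hc0]; exact kSubmodularIn_refl _
    | succ j ih =>
      intro hj
      obtain ⟨n, hn1, hn2, hme⟩ := hs j (by omega)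
      have h1 : KSubmodularIn k (c j ⊓ (c (j + 1) ⊓ U)) (c (j + 1) ⊓ U) :=
        step_lemma hk hn2 hme inf_le_left
      have h2 : c j ⊓ (c (j + 1) ⊓ U) = c j ⊓ U := by
        rw [← inf_assoc, inf_eq_left.mpr hme.1]
      rw [h2] at h1
      exact (ih (by omega)).trans h1
  have hfin := key m le_rfl
  rw [hcm, top_inf_eq] at hfin
  exact hfin.trans hU
end

section
/- Let H be a subgroup of a finite group G and N a normal subgroup of G. If H is k-submodular in G, then HN/N is k-submodular in G/N. -/
open Pointwise

/-- The image of a normal-in-`K` subgroup under a homomorphism is normal in the image. -/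
lemma aux_subgroupOf_map_normal {G G' : Type*} [Group G] [Group G'] (φ : G →* G')
    {H K : Subgroup G} (hHK : H ≤ K) (h : (H.subgroupOf K).Normal) :
    ((H.map φ).subgroupOf (K.map φ)).Normal := by
  constructor
  rintro ⟨x, hx⟩ hxH ⟨g, hg⟩
  rw [Subgroup.mem_subgroupOf] at hxH ⊢
  obtain ⟨h0, hh0, rfl⟩ := hxH
  obtain ⟨k0, hk0, rfl⟩ := hg
  have hmem : k0 * h0 * k0⁻¹ ∈ H := by
    have := h.conj_mem ⟨h0, hHK hh0⟩ (Subgroup.mem_subgroupOf.mpr hh0) ⟨k0, hk0⟩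
    exact Subgroup.mem_subgroupOf.mp this
  exact ⟨k0 * h0 * k0⁻¹, hmem, by simp [map_mul]⟩

/-- A subgroup of prime index in a finite nilpotent group is normal. -/
lemma aux_normal_of_prime_index_of_isNilpotent {G : Type*} [Group G] [Finite G]
    (H : Subgroup G) {p : ℕ} (hp : p.Prime) (h : H.index = p) [Group.IsNilpotent G] :
    H.Normal := by
  have hnc := normalizerCondition_of_isNilpotent (G := G)
  have hlt : H < ⊤ := lt_top_iff_ne_top.mpr (fun ht => by
    rw [ht, Subgroup.index_top] at h; exact hp.one_lt.ne h)
  have hltn : H < Subgroup.normalizer (H : Set G) := hnc H hlt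
  have hdvd : (Subgroup.normalizer (H : Set G)).index ∣ H.index := Subgroup.index_dvd_of_le Subgroup.le_normalizer
  rw [h] at hdvd
  rcases (Nat.Prime.eq_one_or_self_of_dvd hp _ hdvd) with h1 | hpn
  · exact Subgroup.normalizer_eq_top_iff.mp (Subgroup.index_eq_one.mp h1)
  · exfalso
    have := Subgroup.relIndex_mul_index (Subgroup.le_normalizer (H := H))
    rw [h, hpn] at this
    have hrel : H.relIndex (Subgroup.normalizer (H : Set G)) = 1 := by
      exact Nat.eq_of_mul_eq_mul_right hp.pos (this.trans (one_mul p).symm)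
    exact hltn.not_ge (Subgroup.relIndex_eq_one.mp hrel)

/-- Modular embedding is (essentially) preserved by homomorphic images. -/
lemma aux_modularlyEmbedded_map {G G' : Type*} [Group G] [Finite G] [Group G']
    (φ : G →* G') {n : ℕ} (hn : 0 < n) {H K : Subgroup G}
    (h : ModularlyEmbedded n H K) :
    ∃ j, 0 < j ∧ j ≤ n ∧ ModularlyEmbedded j (H.map φ) (K.map φ) := by
  obtain ⟨hHK, hcase⟩ := h
  have hmaple : H.map φ ≤ K.map φ := Subgroup.map_mono hHK
  rcases hcase with hnorm | ⟨p, q, hp, hq, hQnn, hQcard, hidx⟩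
  · exact ⟨n, hn, le_rfl, hmaple, Or.inl (aux_subgroupOf_map_normal φ hHK hnorm)⟩
  haveI : Finite ↥(K.map φ) := Finite.of_surjective _ (φ.subgroupMap_surjective K)
  haveI := Fact.mk hp
  haveI := Fact.mk hq
  set A := H.subgroupOf K with hA
  set B := (H.map φ).subgroupOf (K.map φ) with hB
  set ψ : ↥K →* ↥(K.map φ) := φ.subgroupMap K with hψdef
  have hψ : Function.Surjective ψ := φ.subgroupMap_surjective K
  have hψA : A.map ψ ≤ B := by
    rintro x ⟨a, ha, rfl⟩
    exact Subgroup.mem_subgroupOf.mpr ⟨(a : G), Subgroup.mem_subgroupOf.mp ha, rfl⟩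
  have hcoremap : A.normalCore.map ψ ≤ B.normalCore := by
    haveI : (A.normalCore.map ψ).Normal := Subgroup.Normal.map inferInstance ψ hψ
    exact Subgroup.normal_le_normalCore.mpr
      (le_trans (Subgroup.map_mono A.normalCore_le) hψA)
  let f := QuotientGroup.map A.normalCore B.normalCore ψ
    (Subgroup.map_le_iff_le_comap.mp hcoremap)
  have hfsurj : Function.Surjective f := by
    intro y
    obtain ⟨x, rfl⟩ := QuotientGroup.mk'_surjective _ y
    obtain ⟨z, rfl⟩ := hψ x
    exact ⟨QuotientGroup.mk' _ z, by simp [f, QuotientGroup.map_mk']⟩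
  have hdvd : Nat.card (↥(K.map φ) ⧸ B.normalCore) ∣ p * q ^ n := by
    rw [← hQcard]
    exact Subgroup.card_dvd_of_surjective f hfsurj
  have hBdvd : B.index ∣ p := by
    have h1 : (B.comap ψ).index = B.index := Subgroup.index_comap_of_surjective B hψ
    have h2 : A ≤ B.comap ψ := fun a ha => Subgroup.mem_comap.mpr (hψA ⟨a, ha, rfl⟩)
    calc B.index = (B.comap ψ).index := h1.symm
      _ ∣ A.index := Subgroup.index_dvd_of_le h2
      _ = p := hidx
  have hpq : p ≠ q := by
    rintro rfl
    exact hQnn (IsPGroup.isNilpotent (IsPGroup.of_card (n := n + 1)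
      (by rw [hQcard, pow_succ'])))
  rcases hp.eq_one_or_self_of_dvd _ hBdvd with h1 | hBp
  · refine ⟨n, hn, le_rfl, hmaple, Or.inl ?_⟩
    rw [show (H.map φ).subgroupOf (K.map φ) = ⊤ from Subgroup.index_eq_one.mp h1]
    infer_instance
  by_cases hnil : Group.IsNilpotent (↥(K.map φ) ⧸ B.normalCore)
  · set Bbar := B.map (QuotientGroup.mk' B.normalCore) with hBbar
    have hcomap : Bbar.comap (QuotientGroup.mk' B.normalCore) = B := by
      rw [hBbar, Subgroup.comap_map_eq, QuotientGroup.ker_mk',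
        sup_of_le_left B.normalCore_le]
    have hBbaridx : Bbar.index = p := by
      rw [← Subgroup.index_comap_of_surjective Bbar (QuotientGroup.mk'_surjective _),
        hcomap, hBp]
    haveI hBbarN : Bbar.Normal := aux_normal_of_prime_index_of_isNilpotent Bbar hp hBbaridx
    have hBN : B.Normal := hcomap ▸ hBbarN.comap _
    exact ⟨n, hn, le_rfl, hmaple, Or.inl hBN⟩
  · have hpdvd : p ∣ Nat.card (↥(K.map φ) ⧸ B.normalCore) := by
      have hle : B.index ∣ B.normalCore.index := Subgroup.index_dvd_of_le B.normalCore_le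
      rw [hBp] at hle
      exact hle
    obtain ⟨s, hs⟩ := hpdvd
    have hsdvd : s ∣ q ^ n := by
      rw [hs] at hdvd
      exact (Nat.mul_dvd_mul_iff_left hp.pos).mp hdvd
    obtain ⟨j, hjn, rfl⟩ := (Nat.dvd_prime_pow hq).mp hsdvd
    rcases Nat.eq_zero_or_pos j with rfl | hj0
    · exact absurd (IsPGroup.isNilpotent (IsPGroup.of_card
        (show Nat.card (↥(K.map φ) ⧸ B.normalCore) = p ^ 1 by rw [hs]; simp))) hnil
    · exact ⟨j, hj0, hjn, hmaple, Or.inr ⟨p, q, hp, hq, hnil, hs, hBp⟩⟩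

/-- Lemma 3.6(1): if `H` is `k`-submodular in `G`, then `HN/N` is
`k`-submodular in `G/N`. -/
theorem kSubmodularIn_map_quotient {G : Type*} [Group G] [Finite G]
    {k : ℕ} (hk : 0 < k) {H : Subgroup G} (N : Subgroup G) [N.Normal]
    (hsub : KSubmodularIn k H ⊤) :
    KSubmodularIn k (H.map (QuotientGroup.mk' N)) ⊤ := by
  obtain ⟨m, c, hc0, hcm, hstep⟩ := hsub
  refine ⟨m, fun i => (c i).map (QuotientGroup.mk' N), by simp only []; rw [hc0], ?_, ?_⟩
  · simp only []; rw [hcm, Subgroup.map_top_of_surjective _ (QuotientGroup.mk'_surjective N)]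
  · intro i hi
    obtain ⟨n, hn0, hnk, hme⟩ := hstep i hi
    obtain ⟨j, hj0, hjn, hme'⟩ := aux_modularlyEmbedded_map (QuotientGroup.mk' N) hn0 hme
    exact ⟨j, hj0, hjn.trans hnk, hme'⟩
end

section
/- Let H be a subgroup of a finite group G and N a normal subgroup of G with N ≤ H. If H/N is k-submodular in G/N, then H is k-submodular in G. -/
open Pointwise

/-- Under a surjective homomorphism, the normal core of a preimage is the
preimage of the normal core. -/
theorem normalCore_comap_of_surjective {G Q : Type*} [Group G] [Group Q]
    {f : G →* Q} (hf : Function.Surjective f) (K : Subgroup Q) :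
    (K.comap f).normalCore = K.normalCore.comap f := by
  apply le_antisymm
  · have h1 : ((K.comap f).normalCore.map f).Normal :=
      Subgroup.Normal.map inferInstance f hf
    have h2 : (K.comap f).normalCore.map f ≤ K :=
      Subgroup.map_le_iff_le_comap.2 (Subgroup.normalCore_le _)
    calc (K.comap f).normalCore ≤ ((K.comap f).normalCore.map f).comap f :=
          Subgroup.le_comap_map _ _
      _ ≤ K.normalCore.comap f :=
          Subgroup.comap_mono (Subgroup.normal_le_normalCore.2 h2)
  · have : (K.normalCore.comap f).Normal := Subgroup.Normal.comap inferInstance f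
    exact Subgroup.normal_le_normalCore.2 (Subgroup.comap_mono (Subgroup.normalCore_le K))

/-- Modular embedding is preserved by taking preimages under a surjective
homomorphism. -/
theorem ModularlyEmbedded.comap {G Q : Type*} [Group G] [Group Q]
    {f : G →* Q} (hf : Function.Surjective f) {n : ℕ} {A B : Subgroup Q}
    (h : ModularlyEmbedded n A B) :
    ModularlyEmbedded n (A.comap f) (B.comap f) := by
  obtain ⟨hAB, hrest⟩ := h
  refine ⟨Subgroup.comap_mono hAB, ?_⟩
  -- the restriction of `f` to a map `B.comap f → B`
  set g : ↥(B.comap f) →* ↥B :=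
    MonoidHom.codRestrict (f.domRestrict (B.comap f)) B (fun x => x.2) with hg
  have hgsurj : Function.Surjective g := by
    rintro ⟨b, hb⟩
    obtain ⟨x, rfl⟩ := hf b
    exact ⟨⟨x, hb⟩, rfl⟩
  have hcomap : (A.subgroupOf B).comap g = (A.comap f).subgroupOf (B.comap f) := by
    ext x
    simp [Subgroup.mem_subgroupOf, hg, Subgroup.mem_comap, MonoidHom.domRestrict_apply]
    exact Iff.rfl
  rcases hrest with hnorm | ⟨p, q, hp, hq, hnil, hcard, hidx⟩
  · left
    rw [← hcomap]
    exact Subgroup.Normal.comap hnorm g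
  · right
    refine ⟨p, q, hp, hq, ?_⟩
    have hcore : ((A.comap f).subgroupOf (B.comap f)).normalCore
        = ((A.subgroupOf B).normalCore).comap g := by
      rw [← hcomap, normalCore_comap_of_surjective hgsurj]
    set φ : ↥(B.comap f) →* ↥B ⧸ (A.subgroupOf B).normalCore :=
      (QuotientGroup.mk' _).comp g with hφ
    have hφsurj : Function.Surjective φ :=
      (QuotientGroup.mk'_surjective _).comp hgsurj
    have hker : φ.ker = ((A.comap f).subgroupOf (B.comap f)).normalCore := by
      rw [hφ, ← MonoidHom.comap_ker, QuotientGroup.ker_mk', hcore]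
    have e : (↥(B.comap f) ⧸ ((A.comap f).subgroupOf (B.comap f)).normalCore)
        ≃* (↥B ⧸ (A.subgroupOf B).normalCore) :=
      (QuotientGroup.quotientMulEquivOfEq hker.symm).trans
        (QuotientGroup.quotientKerEquivOfSurjective φ hφsurj)
    refine ⟨fun hn => hnil (nilpotent_of_mulEquiv e), ?_, ?_⟩
    · rw [Nat.card_congr e.toEquiv, hcard]
    · rw [← hcomap, Subgroup.index_comap_of_surjective _ hgsurj, hidx]

/-- Lemma 3.6(2): if `N ≤ H` and `H/N` is `k`-submodular in `G/N`, then `H`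
is `k`-submodular in `G`. -/
theorem kSubmodularIn_of_map_quotient {G : Type*} [Group G] [Finite G]
    {k : ℕ} (hk : 0 < k) {H N : Subgroup G} [N.Normal] (hNH : N ≤ H)
    (hsub : KSubmodularIn k (H.map (QuotientGroup.mk' N)) ⊤) :
    KSubmodularIn k H ⊤ := by
  obtain ⟨m, c, hc0, hcm, hstep⟩ := hsub
  refine ⟨m, fun i => (c i).comap (QuotientGroup.mk' N), ?_, ?_, ?_⟩
  · show (c 0).comap _ = H
    rw [hc0, Subgroup.comap_map_eq_self]
    rw [QuotientGroup.ker_mk']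
    exact hNH
  · show (c m).comap _ = ⊤
    rw [hcm, Subgroup.comap_top]
  · intro i hi
    obtain ⟨n, hn0, hnk, hme⟩ := hstep i hi
    exact ⟨n, hn0, hnk, hme.comap (QuotientGroup.mk'_surjective N)⟩
end

section
/- Let G be a finite group, p the greatest prime divisor of |G|, and H a Sylow p-subgroup of G. If H is k-submodular in G, then H is normal in G. -/
open Pointwise

section Aux

variable {G : Type*} [Group G]

lemma conj_mem_of_subgroupOf_normal {N L : Subgroup G} (hNL : N ≤ L)
    (hN : (N.subgroupOf L).Normal) {l x : G} (hl : l ∈ L) (hx : x ∈ N) :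
    l * x * l⁻¹ ∈ N := by
  have := hN.conj_mem ⟨x, hNL hx⟩ (Subgroup.mem_subgroupOf.mpr hx) ⟨l, hl⟩
  simpa [Subgroup.mem_subgroupOf] using this

lemma le_normalizer_of_le_of_normal [Finite G] {p : ℕ} [Fact p.Prime] (P : Sylow p G)
    {N L : Subgroup G} (hPN : ↑P ≤ N) (hNL : N ≤ L)
    (hN : (N.subgroupOf L).Normal) (hnorm : N ≤ Subgroup.normalizer ((P : Subgroup G) : Set G)) :
    L ≤ Subgroup.normalizer ((P : Subgroup G) : Set G) := by
  intro l hl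
  have hle : ((l • P : Sylow p G) : Subgroup G) ≤ N := by
    rw [Sylow.coe_subgroup_smul]
    intro x hx
    rw [Subgroup.mem_pointwise_smul_iff_inv_smul_mem] at hx
    have hx2 : l⁻¹ * x * l ∈ N := by
      simpa [MulAut.smul_def] using hPN hx
    have h3 := conj_mem_of_subgroupOf_normal hNL hN hl hx2
    rw [show l * (l⁻¹ * x * l) * l⁻¹ = x by group] at h3
    exact h3
  have hsup : IsPGroup p (((l • P : Sylow p G) : Subgroup G) ⊔ (P : Subgroup G) : Subgroup G) :=
    IsPGroup.to_sup_of_normal_right' (l • P).2 P.2 (hle.trans hnorm)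
  have e1 := P.3 hsup le_sup_right
  have e2 := (l • P).3 hsup le_sup_left
  exact Sylow.smul_eq_iff_mem_normalizer.mp (Sylow.ext (e2.symm.trans e1))

lemma normal_of_sylow_card_aux {Q : Type*} [Group Q] [Finite Q] {p p' n : ℕ}
    (hp : p.Prime) (hp' : p'.Prime) (hlt : p' < p)
    (hcard : Nat.card Q = p' * p ^ n) (P0 : Subgroup Q) (hP0 : Nat.card P0 = p ^ n) :
    P0.Normal := by
  haveI : Fact p.Prime := ⟨hp⟩
  have hfact : (Nat.card Q).factorization p = n := by
    rw [hcard, Nat.factorization_mul hp'.pos.ne' (pow_ne_zero n hp.pos.ne'),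
      hp.factorization_pow, hp'.factorization]
    simp [Finsupp.single_apply, hlt.ne]
  let S : Sylow p Q := Sylow.ofCard P0 (by rw [hP0, hfact])
  have hidx : P0.index = p' := by
    have h1 := Subgroup.card_mul_index P0
    rw [hP0, hcard, mul_comm p' (p ^ n)] at h1
    exact Nat.eq_of_mul_eq_mul_left (pow_pos hp.pos n) h1
  have hdvd : Nat.card (Sylow p Q) ∣ p' := hidx ▸ S.card_dvd_index
  have hone : Nat.card (Sylow p Q) = 1 := by
    rcases (Nat.Prime.eq_one_or_self_of_dvd hp' _ hdvd) with h | h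
    · exact h
    · exfalso
      have hmod : Nat.card (Sylow p Q) % p = 1 % p := card_sylow_modEq_one p Q
      rw [h, Nat.mod_eq_of_lt hlt, Nat.mod_eq_of_lt hp.one_lt] at hmod
      exact hp'.one_lt.ne' hmod
  haveI : Subsingleton (Sylow p Q) := (Nat.card_eq_one_iff_unique.mp hone).1
  have hnt : Subgroup.normalizer (P0 : Set Q) = ⊤ := by
    rw [eq_top_iff]
    intro g _
    exact Sylow.smul_eq_iff_mem_normalizer.mp (Subsingleton.elim (g • S) S)
  exact Subgroup.normalizer_eq_top_iff.mp hnt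

lemma step_lemma_s11 [Finite G] {p : ℕ} [Fact p.Prime]
    (hgreatest : ∀ q : ℕ, q.Prime → q ∣ Nat.card G → q ≤ p)
    (P : Sylow p G) {K L : Subgroup G} {n : ℕ}
    (hPK : ↑P ≤ K) (hKnorm : K ≤ Subgroup.normalizer ((P : Subgroup G) : Set G))
    (hme : ModularlyEmbedded n K L) :
    L ≤ Subgroup.normalizer ((P : Subgroup G) : Set G) := by
  obtain ⟨hKL, hcase⟩ := hme
  rcases hcase with hnormal | ⟨p', q, hp', hq, hnn, hcard, hidx⟩
  · exact le_normalizer_of_le_of_normal P hPK hKL hnormal hKnorm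
  have hp : p.Prime := Fact.out
  set K' := K.subgroupOf L with hK'
  set C := K'.normalCore with hCdef
  set π := QuotientGroup.mk' C with hπ
  have hCK : C ≤ K' := Subgroup.normalCore_le K'
  have hcomap : (K'.map π).comap π = K' := by
    rw [Subgroup.comap_map_eq, QuotientGroup.ker_mk', sup_of_le_left hCK]
  have hidx2 : (K'.map π).index = p' := by
    have h := Subgroup.index_comap_of_surjective (H := K'.map π)
      (QuotientGroup.mk'_surjective C)
    rw [hcomap] at h
    rw [← h, hidx]
  have hcardmap : Nat.card (K'.map π) = q ^ n := by
    have h := Subgroup.card_mul_index (K'.map π)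
    rw [hidx2, hcard, mul_comm p' (q ^ n)] at h
    exact Nat.eq_of_mul_eq_mul_right hp'.pos h
  by_cases hqp : q = p
  · subst hqp
    by_cases hp'p : p' = q
    · exact absurd ((IsPGroup.of_card (n := n + 1)
        (by rw [hcard, hp'p]; ring)).isNilpotent) hnn
    · have hp'dvd : p' ∣ Nat.card G := by
        have h1 : p' ∣ Nat.card (↥L ⧸ C) := hcard ▸ dvd_mul_right p' (q ^ n)
        exact h1.trans ((Subgroup.card_quotient_dvd_card C).trans L.card_subgroup_dvd_card)
      have hlt : p' < q := lt_of_le_of_ne (hgreatest p' hp' hp'dvd) hp'p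
      have h0 : (K'.map π).Normal :=
        normal_of_sylow_card_aux hp hp' hlt hcard (K'.map π) hcardmap
      have hKnormal : K'.Normal := by
        have := h0.comap π
        rwa [hcomap] at this
      exact le_normalizer_of_le_of_normal P hPK hKL hKnormal hKnorm
  · have hPL : (↑P : Subgroup G) ≤ L := hPK.trans hKL
    have hH'pg : IsPGroup p ((↑P : Subgroup G).subgroupOf L) := P.2.comap_subtype
    have hmaple : ((↑P : Subgroup G).subgroupOf L).map π ≤ K'.map π :=
      Subgroup.map_mono fun x hx =>
        Subgroup.mem_subgroupOf.mpr (hPK (Subgroup.mem_subgroupOf.mp hx))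
    have hcard' : Nat.card (((↑P : Subgroup G).subgroupOf L).map π) ∣ q ^ n :=
      hcardmap ▸ Subgroup.card_dvd_of_le hmaple
    obtain ⟨a, ha⟩ := IsPGroup.iff_card.mp (hH'pg.map π)
    have hdv : p ^ a ∣ q ^ n := ha ▸ hcard'
    have hcop : Nat.Coprime (p ^ a) (q ^ n) :=
      Nat.Coprime.pow a n ((Nat.coprime_primes hp hq).mpr fun h => hqp h.symm)
    have hbot : ((↑P : Subgroup G).subgroupOf L).map π = ⊥ :=
      Subgroup.card_eq_one.mp (by rw [ha, hcop.eq_one_of_dvd hdv])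
    have hker : (↑P : Subgroup G).subgroupOf L ≤ C := by
      have h := (Subgroup.map_eq_bot_iff _).mp hbot
      rwa [QuotientGroup.ker_mk'] at h
    have hPN : (↑P : Subgroup G) ≤ C.map L.subtype := by
      have h : ((↑P : Subgroup G).subgroupOf L).map L.subtype ≤ C.map L.subtype :=
        Subgroup.map_mono hker
      rwa [Subgroup.subgroupOf_map_subtype, inf_of_le_left hPL] at h
    have hNK : C.map L.subtype ≤ K := by
      calc C.map L.subtype ≤ K'.map L.subtype := Subgroup.map_mono hCK
        _ = K ⊓ L := Subgroup.subgroupOf_map_subtype K L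
        _ ≤ K := inf_le_left
    have hNnormal : ((C.map L.subtype).subgroupOf L).Normal := by
      rw [← Subgroup.comap_subtype, Subgroup.comap_map_eq, Subgroup.ker_subtype, sup_bot_eq]
      exact Subgroup.normalCore_normal K'
    exact le_normalizer_of_le_of_normal P hPN (Subgroup.map_subtype_le C) hNnormal
      (hNK.trans hKnorm)

end Aux

/-- Lemma 3.8: a `k`-submodular Sylow `p`-subgroup for the greatest prime
divisor `p` of the order of `G` is normal. -/
theorem normal_of_kSubmodular_sylow {G : Type*} [Group G] [Finite G]
    {k : ℕ} (hk : 0 < k) {p : ℕ} (hp : p.Prime) (hdvd : p ∣ Nat.card G)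
    (hgreatest : ∀ q : ℕ, q.Prime → q ∣ Nat.card G → q ≤ p)
    (H : Sylow p G) (hsub : KSubmodularIn k (H : Subgroup G) ⊤) :
    (H : Subgroup G).Normal := by
  haveI : Fact p.Prime := ⟨hp⟩
  obtain ⟨m, c, hc0, hcm, hstep⟩ := hsub
  have key : ∀ i, i ≤ m → ↑H ≤ c i ∧ c i ≤ Subgroup.normalizer ((H : Subgroup G) : Set G) := by
    intro i
    induction i with
    | zero => exact fun _ => by rw [hc0]; exact ⟨le_rfl, Subgroup.le_normalizer⟩
    | succ j ih =>
      intro hjm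
      obtain ⟨h1, h2⟩ := ih (Nat.le_of_succ_le hjm)
      obtain ⟨n, -, -, hme⟩ := hstep j (Nat.lt_of_succ_le hjm)
      exact ⟨h1.trans hme.1, step_lemma_s11 hgreatest H h1 h2 hme⟩
  have htop : (⊤ : Subgroup G) ≤ Subgroup.normalizer ((H : Subgroup G) : Set G) := hcm ▸ (key m le_rfl).2
  exact Subgroup.normalizer_eq_top_iff.mp (le_antisymm le_top htop)
end

section
/- Let G be a finite group in which every Sylow subgroup is k-submodular, and let N be a normal subgroup of G. Then every Sylow subgroup of G/N is k-submodular in G/N. -/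
open Pointwise

lemma exists_dvd_pow_of_forall_prime' (p : ℕ) : ∀ a : ℕ, a ≠ 0 →
    (∀ q : ℕ, q.Prime → q ∣ a → q ∣ p) → ∃ m : ℕ, a ∣ p ^ m := by
  intro a
  induction a using Nat.strong_induction_on with
  | _ a ih =>
    intro ha h
    rcases eq_or_ne a 1 with rfl | ha1
    · exact ⟨0, by simp⟩
    · have hq : a.minFac.Prime := Nat.minFac_prime ha1
      obtain ⟨b, hab⟩ := Nat.minFac_dvd a
      have hb0 : b ≠ 0 := by rintro rfl; simp at hab; exact ha hab
      have hblt : b < a := by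
        rw [hab]
        have := hq.two_le
        calc b = 1 * b := (one_mul b).symm
        _ < a.minFac * b := by
          have hb : 0 < b := Nat.pos_of_ne_zero hb0
          exact (Nat.mul_lt_mul_right hb).mpr (by omega)
      obtain ⟨m, hm⟩ := ih b hblt hb0 (fun q hq' hqb => h q hq' (by rw [hab]; exact hqb.mul_left _))
      refine ⟨m + 1, ?_⟩
      rw [hab, pow_succ']
      exact Nat.mul_dvd_mul (h _ hq (Nat.minFac_dvd a)) hm

lemma isPGroup_quotient_of_surj {p : ℕ} {G H : Type*} [Group G] [Group H]
    (f : G →* H) (hf : Function.Surjective f) (h : IsPGroup p G) : IsPGroup p H := by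
  intro y
  obtain ⟨x, rfl⟩ := hf y
  obtain ⟨n, hn⟩ := h x
  exact ⟨n, by rw [← map_pow, hn, map_one]⟩

lemma not_dvd_card_of_isPGroup' {p r : ℕ} (hr : r.Prime) (hrp : ¬ r ∣ p)
    (G : Type*) [Group G] [Finite G] (h : IsPGroup p G) : ¬ r ∣ Nat.card G := by
  intro hdvd
  haveI : Fact r.Prime := ⟨hr⟩
  have hF : Fintype G := Fintype.ofFinite G
  obtain ⟨g, hg⟩ := exists_prime_orderOf_dvd_card (G := G) r (by rwa [← Nat.card_eq_fintype_card])
  obtain ⟨n, hn⟩ := h g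
  have : orderOf g ∣ p ^ n := orderOf_dvd_of_pow_eq_one hn
  rw [hg] at this
  exact hrp (hr.dvd_of_dvd_pow this)


universe u


/-- Key supplement lemma. -/
lemma exists_pGroup_sup_eq_top (p : ℕ) : ∀ (n : ℕ) (G : Type u) [Group G] [Finite G],
    Nat.card G = n →
    ∀ (N : Subgroup G) [N.Normal], IsPGroup p (G ⧸ N) →
    ∃ Q : Subgroup G, IsPGroup p Q ∧ Q ⊔ N = ⊤ := by
  intro n
  induction n using Nat.strong_induction_on with
  | _ n ih =>
  intro G _ _ hcard N hNnorm hquot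
  by_cases hGp : IsPGroup p G
  · refine ⟨⊤, fun x => ?_, by simp⟩
    obtain ⟨m, hm⟩ := hGp (x : G)
    exact ⟨m, Subtype.ext (by push_cast; exact hm)⟩
  · -- find a prime r dividing |G| but not p
    rw [IsPGroup] at hGp; push_neg at hGp
    obtain ⟨g, hg⟩ := hGp
    have hgo : orderOf g ≠ 0 := (orderOf_pos g).ne'
    have hr' : ∃ r : ℕ, r.Prime ∧ r ∣ orderOf g ∧ ¬ r ∣ p := by
      by_contra hcon
      push_neg at hcon
      obtain ⟨m, hm⟩ := exists_dvd_pow_of_forall_prime' p (orderOf g) hgo hcon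
      exact hg m (orderOf_dvd_iff_pow_eq_one.mp hm)
    obtain ⟨r, hr, hrg, hrp⟩ := hr'
    haveI : Fact r.Prime := ⟨hr⟩
    have hrG : r ∣ Nat.card G := hrg.trans (orderOf_dvd_natCard g)
    have hrQ : ¬ r ∣ Nat.card (G ⧸ N) := not_dvd_card_of_isPGroup' hr hrp _ hquot
    have hrN : r ∣ Nat.card N := by
      rcases (Nat.Prime.dvd_mul hr).mp
        (N.card_eq_card_quotient_mul_card_subgroup ▸ hrG) with h | h
      · exact absurd h hrQ
      · exact h
    obtain ⟨R⟩ : Nonempty (Sylow r ↥N) := inferInstance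
    set R' : Subgroup G := (R : Subgroup ↥N).map N.subtype with hR'def
    have hR'N : R' ≤ N := Subgroup.map_subtype_le _
    have hcardR' : 1 < Nat.card R' := by
      have h1 : Nat.card R' = Nat.card R :=
        (Nat.card_congr (Subgroup.equivMapOfInjective _ _ N.subtype_injective).toEquiv).symm
      rw [h1, R.card_eq_multiplicity]
      exact Nat.one_lt_pow
        (hr.factorization_pos_of_dvd Nat.card_pos.ne' hrN).ne' hr.one_lt
    by_cases hHtop : Subgroup.normalizer (R' : Set G) = ⊤
    · -- R' is normal in G; pass to G ⧸ R'
      haveI hR'norm : R'.Normal := Subgroup.normalizer_eq_top_iff.mp hHtop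
      set π := QuotientGroup.mk' R' with hπdef
      have hπsurj : Function.Surjective π := QuotientGroup.mk'_surjective R'
      set M : Subgroup (G ⧸ R') := N.map π with hMdef
      haveI hMnorm : M.Normal := hNnorm.map π hπsurj
      have hMquot : IsPGroup p ((G ⧸ R') ⧸ M) := by
        intro xq
        obtain ⟨z, rfl⟩ := QuotientGroup.mk_surjective xq
        obtain ⟨x, rfl⟩ := QuotientGroup.mk_surjective z
        obtain ⟨m, hm⟩ := hquot ((x : G ⧸ N))
        refine ⟨m, ?_⟩
        have hxN : x ^ p ^ m ∈ N := by
          rwa [← QuotientGroup.mk_pow, QuotientGroup.eq_one_iff] at hm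
        have : ((x : G ⧸ R') ^ p ^ m) ∈ M := ⟨x ^ p ^ m, hxN, by rw [← QuotientGroup.mk_pow]; rfl⟩
        rw [← QuotientGroup.mk_pow, QuotientGroup.eq_one_iff]
        exact this
      have hcardlt : Nat.card (G ⧸ R') < n := by
        rw [← hcard, R'.card_eq_card_quotient_mul_card_subgroup]
        exact (Nat.lt_mul_iff_one_lt_right Nat.card_pos).mpr hcardR'
      obtain ⟨Qb, hQbp, hQbsup⟩ := ih _ hcardlt (G ⧸ R') rfl M hMquot
      set Q₁ : Subgroup G := Qb.comap π with hQ₁def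
      have hRQ₁ : R' ≤ Q₁ := fun x hx => by
        show π x ∈ Qb
        have : π x = 1 := (QuotientGroup.eq_one_iff x).mpr hx
        rw [this]; exact Qb.one_mem
      have hQ₁N : Q₁ ⊔ N = ⊤ := by
        rw [eq_top_iff]
        intro x _
        have hx : π x ∈ (↑(Qb ⊔ M) : Set (G ⧸ R')) := by rw [hQbsup]; trivial
        rw [Subgroup.mul_normal] at hx
        obtain ⟨a, ha, b, hb, hab⟩ := hx
        obtain ⟨mm, hmN, rfl⟩ := hb
        have hxm : x * mm⁻¹ ∈ Q₁ := by
          show π (x * mm⁻¹) ∈ Qb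
          have : π (x * mm⁻¹) = a := by
            rw [map_mul, map_inv, ← hab]
            group
          rw [this]; exact ha
        have : x = (x * mm⁻¹) * mm := by group
        rw [this]
        exact Subgroup.mul_mem_sup hxm hmN
      -- Schur–Zassenhaus inside Q₁
      set Rsub : Subgroup ↥Q₁ := R'.subgroupOf Q₁ with hRsubdef
      haveI hRsubnorm : Rsub.Normal := by
        constructor
        intro x hx gg
        rw [Subgroup.mem_subgroupOf] at hx ⊢
        exact hR'norm.conj_mem _ hx _
      have hcardRsub : Nat.card Rsub = Nat.card R' :=
        Nat.card_congr (Subgroup.subgroupOfEquivOfLe hRQ₁).toEquiv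
      set φ : ↥Q₁ →* G ⧸ R' := π.comp Q₁.subtype with hφdef
      have hkerφ : φ.ker = Rsub := by
        rw [hφdef, ← MonoidHom.comap_ker, QuotientGroup.ker_mk']
        rfl
      have hrangeφ : φ.range = Qb := by
        rw [hφdef, MonoidHom.range_comp, Subgroup.range_subtype, hQ₁def,
          Subgroup.map_comap_eq_self_of_surjective hπsurj]
      have hidx : Rsub.index = Nat.card Qb := by
        rw [← hkerφ, Subgroup.index_ker, hrangeφ]
      have hcop : (Nat.card Rsub).Coprime Rsub.index := by
        rw [hcardRsub, hidx]
        have h1 : Nat.card R' = Nat.card R :=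
          (Nat.card_congr (Subgroup.equivMapOfInjective _ _ N.subtype_injective).toEquiv).symm
        rw [h1, R.card_eq_multiplicity]
        exact Nat.Coprime.pow_left _
          ((hr.coprime_iff_not_dvd).mpr (not_dvd_card_of_isPGroup' hr hrp _ hQbp))
      obtain ⟨C, hC⟩ := Subgroup.exists_right_complement'_of_coprime hcop
      refine ⟨C.map Q₁.subtype, ?_, ?_⟩
      · rintro ⟨x, hx⟩
        obtain ⟨c, hcC, rfl⟩ := hx
        have hcQb : π (c : G) ∈ Qb := c.2
        obtain ⟨m, hm⟩ := hQbp ⟨π (c : G), hcQb⟩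
        have hm' : π ((c : G) ^ p ^ m) = 1 := by
          have := congrArg (Subtype.val) hm
          push_cast at this
          rw [map_pow]
          exact this
        have hcR : (c : G) ^ p ^ m ∈ R' := (QuotientGroup.eq_one_iff _).mp hm'
        have hmem : c ^ p ^ m ∈ Rsub ⊓ C :=
          ⟨Subgroup.mem_subgroupOf.mpr (by push_cast; exact hcR), pow_mem hcC _⟩
        have : c ^ p ^ m = 1 := by
          have := hC.disjoint.le_bot hmem
          simpa using this
        refine ⟨m, Subtype.ext ?_⟩
        have := congrArg (Subtype.val) this
        push_cast at this ⊢
        exact this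
      · have hQR : (C.map Q₁.subtype) ⊔ R' = Q₁ := by
          have h1 : C ⊔ Rsub = ⊤ := by rw [sup_comm]; exact hC.sup_eq_top
          calc C.map Q₁.subtype ⊔ R' = C.map Q₁.subtype ⊔ (R' ⊓ Q₁) := by
                rw [inf_of_le_left hRQ₁]
            _ = C.map Q₁.subtype ⊔ Rsub.map Q₁.subtype := by
                rw [Subgroup.subgroupOf_map_subtype]
            _ = (C ⊔ Rsub).map Q₁.subtype := (Subgroup.map_sup _ _ _).symm
            _ = (⊤ : Subgroup ↥Q₁).map Q₁.subtype := by rw [h1]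
            _ = Q₁ := by rw [← MonoidHom.range_eq_map, Subgroup.range_subtype]
        calc C.map Q₁.subtype ⊔ N = C.map Q₁.subtype ⊔ (R' ⊔ N) := by
              rw [sup_eq_right.mpr hR'N]
          _ = (C.map Q₁.subtype ⊔ R') ⊔ N := by rw [sup_assoc]
          _ = Q₁ ⊔ N := by rw [hQR]
          _ = ⊤ := hQ₁N
    · -- Frattini argument: work inside H = normalizer of R'
      set H : Subgroup G := Subgroup.normalizer (R' : Set G) with hHdef
      have hfrat : H ⊔ N = ⊤ := Sylow.normalizer_sup_eq_top R
      set M : Subgroup ↥H := N.subgroupOf H with hMdef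
      haveI hMnorm : M.Normal := by
        constructor
        intro x hx gg
        rw [Subgroup.mem_subgroupOf] at hx ⊢
        exact hNnorm.conj_mem _ hx _
      have hMquot : IsPGroup p (↥H ⧸ M) := by
        intro xq
        obtain ⟨x, rfl⟩ := QuotientGroup.mk_surjective xq
        obtain ⟨m, hm⟩ := hquot (((x : G) : G ⧸ N))
        refine ⟨m, ?_⟩
        have hxN : (x : G) ^ p ^ m ∈ N := by
          rwa [← QuotientGroup.mk_pow, QuotientGroup.eq_one_iff] at hm
        rw [← QuotientGroup.mk_pow, QuotientGroup.eq_one_iff]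
        rw [Subgroup.mem_subgroupOf]
        push_cast
        exact hxN
      have hcardlt : Nat.card ↥H < n := by
        rw [← hcard, H.card_eq_card_quotient_mul_card_subgroup]
        have hidx1 : Nat.card (G ⧸ H) ≠ 1 := by
          intro h1
          exact hHtop (Subgroup.index_eq_one.mp h1)
        have hidx0 : Nat.card (G ⧸ H) ≠ 0 := Nat.card_pos.ne'
        have : 1 < Nat.card (G ⧸ H) := by omega
        exact (Nat.lt_mul_iff_one_lt_left Nat.card_pos).mpr this
      obtain ⟨Q₂, hQ₂p, hQ₂sup⟩ := ih _ hcardlt ↥H rfl M hMquot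
      refine ⟨Q₂.map H.subtype, hQ₂p.map H.subtype, ?_⟩
      have h3 : Q₂.map H.subtype ⊔ (N ⊓ H) = H := by
        rw [← Subgroup.subgroupOf_map_subtype N H, ← Subgroup.map_sup, hQ₂sup,
          ← MonoidHom.range_eq_map, Subgroup.range_subtype]
      have h4 : H ≤ Q₂.map H.subtype ⊔ N :=
        h3.symm.trans_le (sup_le_sup_left inf_le_left _)
      rw [eq_top_iff, ← hfrat]
      exact sup_le (h4.trans le_rfl) le_sup_right


section Map

variable {G G' : Type*} [Group G] [Group G'] [Finite G] {f : G →* G'}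

lemma subgroupOf_map_eq (hf : Function.Surjective f) {H K : Subgroup G} (hHK : H ≤ K) :
    (H.subgroupOf K).map (f.subgroupMap K) = (H.map f).subgroupOf (K.map f) := by
  ext ⟨y, hy⟩
  simp only [Subgroup.mem_map, Subgroup.mem_subgroupOf]
  constructor
  · rintro ⟨⟨x, hxK⟩, hxH, hx⟩
    have : f x = y := congrArg Subtype.val hx
    exact this ▸ ⟨x, hxH, rfl⟩
  · rintro ⟨x, hxH, hxy⟩
    exact ⟨⟨x, hHK hxH⟩, hxH, Subtype.ext hxy⟩

/-- Mapping lemma for modular embedding. -/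
lemma modularlyEmbedded_map (hf : Function.Surjective f) {n : ℕ} {H K : Subgroup G}
    (hME : ModularlyEmbedded n H K) :
    ∃ m : ℕ, m ≤ n ∧ (0 < n → 0 < m) ∧ ModularlyEmbedded m (H.map f) (K.map f) := by
  obtain ⟨hHK, hor⟩ := hME
  haveI : Finite G' := Finite.of_surjective f hf
  have hHK' : H.map f ≤ K.map f := Subgroup.map_mono hHK
  set ψ : ↥K →* ↥(K.map f) := f.subgroupMap K with hψdef
  have hψsurj : Function.Surjective ψ := f.subgroupMap_surjective K
  have hJ : (H.subgroupOf K).map ψ = (H.map f).subgroupOf (K.map f) :=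
    subgroupOf_map_eq hf hHK
  by_cases hN' : ((H.map f).subgroupOf (K.map f)).Normal
  · exact ⟨n, le_rfl, fun h => h, hHK', Or.inl hN'⟩
  · rcases hor with hnorm | ⟨p, q, hp, hq, hnonnil, hcard, hidx⟩
    · exact absurd (hJ ▸ hnorm.map ψ hψsurj) hN'
    -- quotient by normal cores
    set J : Subgroup ↥K := H.subgroupOf K with hJdef
    set J' : Subgroup ↥(K.map f) := (H.map f).subgroupOf (K.map f) with hJ'def
    set c : Subgroup ↥K := J.normalCore with hcdef
    set c' : Subgroup ↥(K.map f) := J'.normalCore with hc'def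
    have hcc' : c ≤ c'.comap ψ := by
      have hcn : c.Normal := J.normalCore_normal
      have h1 : (c.map ψ).Normal := hcn.map ψ hψsurj
      have h2 : c.map ψ ≤ J' := hJ ▸ Subgroup.map_mono J.normalCore_le
      have h3 : c.map ψ ≤ c' := Subgroup.normal_le_normalCore.mpr h2
      exact fun x hx => h3 ⟨x, hx, rfl⟩
    set θ : (↥K ⧸ c) →* (↥(K.map f) ⧸ c') := QuotientGroup.map c c' ψ hcc' with hθdef
    have hθsurj : Function.Surjective θ := by
      intro x
      obtain ⟨y, rfl⟩ := QuotientGroup.mk_surjective x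
      obtain ⟨z, rfl⟩ := hψsurj y
      exact ⟨QuotientGroup.mk z, rfl⟩
    have hdvd : Nat.card (↥(K.map f) ⧸ c') ∣ p * q ^ n := by
      rw [← hcard]
      exact Subgroup.card_dvd_of_surjective θ hθsurj
    -- index of J' is p
    have hidx' : J'.index = p := by
      have h1 : J'.index ∣ p := by
        rw [← hidx, ← hJ]
        exact Subgroup.index_map_dvd _ hψsurj
      rcases (Nat.Prime.eq_one_or_self_of_dvd hp _ h1) with h | h
      · refine absurd ?_ hN'
        rw [Subgroup.index_eq_one] at h
        rw [h]
        infer_instance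
      · exact h
    -- the quotient is not nilpotent
    have hnonnil' : ¬ Group.IsNilpotent (↥(K.map f) ⧸ c') := by
      intro hnil
      apply hN'
      set π' := QuotientGroup.mk' c' with hπ'def
      have hker : π'.ker = c' := QuotientGroup.ker_mk' c'
      have hkerle : π'.ker ≤ J' := hker.trans_le J'.normalCore_le
      have hidxmap : (J'.map π').index = p := by
        rw [Subgroup.index_map_eq _ (QuotientGroup.mk'_surjective c') hkerle, hidx']
      have hcoatom : IsCoatom (J'.map π') := by
        constructor
        · intro htop
          rw [htop] at hidxmap
          rw [Subgroup.index_top] at hidxmap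
          exact hp.one_lt.ne' hidxmap.symm
        · intro B hB
          have hBdvd : B.index ∣ p := hidxmap ▸ Subgroup.index_dvd_of_le hB.le
          rcases hp.eq_one_or_self_of_dvd _ hBdvd with h | h
          · exact Subgroup.index_eq_one.mp h
          · exfalso
            have hrel := Subgroup.relIndex_mul_index hB.le
            rw [h, hidxmap] at hrel
            have h1 : (J'.map π').relIndex B = 1 :=
              Nat.eq_of_mul_eq_mul_right hp.pos (by rw [hrel, one_mul])
            exact absurd (Subgroup.relIndex_eq_one.mp h1) (not_le_of_gt hB)
      have hnormmap : (J'.map π').Normal :=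
        Subgroup.NormalizerCondition.normal_of_coatom _
          (normalizerCondition_of_isNilpotent (h := hnil)) hcoatom
      have hcomap : (J'.map π').comap π' = J' := by
        rw [Subgroup.comap_map_eq, hker, sup_of_le_left J'.normalCore_le]
      exact hcomap ▸ hnormmap.comap π'
    -- p ≠ q
    have hpq : p ≠ q := by
      rintro rfl
      apply hnonnil
      haveI : Fact p.Prime := ⟨hp⟩
      have : Nat.card (↥K ⧸ c) = p ^ (n + 1) := by rw [hcard, pow_succ']
      exact (IsPGroup.of_card this).isNilpotent
    -- p divides the card of the quotient
    have hpdvd : p ∣ Nat.card (↥(K.map f) ⧸ c') := by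
      have hkerle : (QuotientGroup.mk' c').ker ≤ J' :=
        (QuotientGroup.ker_mk' c').trans_le J'.normalCore_le
      have : (J'.map (QuotientGroup.mk' c')).index = p := by
        rw [Subgroup.index_map_eq _ (QuotientGroup.mk'_surjective c') hkerle, hidx']
      exact this ▸ Subgroup.index_dvd_card _
    -- conclude card = p * q ^ m
    obtain ⟨e, he⟩ := hpdvd
    have hedvd : e ∣ q ^ n := by
      rw [he] at hdvd
      exact (Nat.mul_dvd_mul_iff_left hp.pos).mp hdvd
    obtain ⟨m, hmn, rfl⟩ := (Nat.dvd_prime_pow hq).mp hedvd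
    have hm1 : 0 < m := by
      by_contra h0
      push_neg at h0
      interval_cases m
      apply hnonnil'
      haveI : Fact p.Prime := ⟨hp⟩
      have hcp : Nat.card (↥(K.map f) ⧸ c') = p ^ 1 := by rw [he]; simp
      exact (IsPGroup.of_card hcp).isNilpotent
    exact ⟨m, hmn, fun _ => hm1, hHK', Or.inr ⟨p, q, hp, hq, hnonnil', he, hidx'⟩⟩

end Map

lemma kSubmodularIn_map {G G' : Type*} [Group G] [Group G'] [Finite G] {f : G →* G'}
    (hf : Function.Surjective f) {k : ℕ} {H : Subgroup G}
    (h : KSubmodularIn k H ⊤) : KSubmodularIn k (H.map f) ⊤ := by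
  obtain ⟨m, c, hc0, hcm, hstep⟩ := h
  refine ⟨m, fun i => (c i).map f, by simp only [hc0], by
    simp only [hcm, Subgroup.map_top_of_surjective _ hf], ?_⟩
  intro i hi
  obtain ⟨n, hn0, hnk, hME⟩ := hstep i hi
  obtain ⟨m', hm'n, hm'pos, hME'⟩ := modularlyEmbedded_map hf hME
  exact ⟨m', hm'pos hn0, hm'n.trans hnk, hME'⟩

/-- Lemma 3.9(2): the class of groups with all Sylow subgroups `k`-submodular
is closed under quotients. -/
theorem sylow_kSubmodular_quotient {G : Type*} [Group G] [Finite G]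
    {k : ℕ} (hk : 0 < k)
    (hG : ∀ (p : ℕ) (P : Sylow p G), KSubmodularIn k (P : Subgroup G) ⊤)
    (N : Subgroup G) [N.Normal] :
    ∀ (p : ℕ) (P : Sylow p (G ⧸ N)), KSubmodularIn k (P : Subgroup (G ⧸ N)) ⊤ := by
  intro p P
  set f := QuotientGroup.mk' N with hfdef
  have hfsurj : Function.Surjective f := QuotientGroup.mk'_surjective N
  set K : Subgroup G := (P : Subgroup (G ⧸ N)).comap f with hKdef
  have hNK : N ≤ K := fun x hx => by
    show f x ∈ (P : Subgroup (G ⧸ N))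
    have h1 : f x = 1 := (QuotientGroup.eq_one_iff x).mpr hx
    rw [h1]; exact one_mem _
  haveI : (N.subgroupOf K).Normal := by
    constructor
    intro x hx g
    rw [Subgroup.mem_subgroupOf] at hx ⊢
    exact ‹N.Normal›.conj_mem _ hx _
  have hquot : IsPGroup p (↥K ⧸ N.subgroupOf K) := by
    intro xq
    obtain ⟨x, rfl⟩ := QuotientGroup.mk_surjective xq
    have hx : f (x : G) ∈ (P : Subgroup (G ⧸ N)) := x.2
    obtain ⟨n, hn⟩ := P.2 ⟨f (x : G), hx⟩
    have hn' : f ((x : G) ^ p ^ n) = 1 := by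
      have h2 := congrArg Subtype.val hn
      push_cast at h2
      rw [map_pow]
      exact h2
    refine ⟨n, ?_⟩
    rw [← QuotientGroup.mk_pow, QuotientGroup.eq_one_iff, Subgroup.mem_subgroupOf]
    push_cast
    exact (QuotientGroup.eq_one_iff _).mp hn'
  obtain ⟨Q₂, hQ₂p, hQ₂sup⟩ :=
    exists_pGroup_sup_eq_top p (Nat.card ↥K) ↥K rfl (N.subgroupOf K) hquot
  set Q : Subgroup G := Q₂.map K.subtype with hQdef
  have hQp : IsPGroup p Q := hQ₂p.map K.subtype
  have hQN : Q ⊔ N = K := by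
    have h3 : Q ⊔ (N ⊓ K) = K := by
      rw [hQdef, ← Subgroup.subgroupOf_map_subtype N K, ← Subgroup.map_sup, hQ₂sup,
        ← MonoidHom.range_eq_map, Subgroup.range_subtype]
    rwa [inf_of_le_left hNK] at h3
  have hKmap : K.map f = P := Subgroup.map_comap_eq_self_of_surjective hfsurj _
  have hQmap : Q.map f = P := by
    rw [← hKmap, ← hQN, Subgroup.map_sup]
    have h4 : N.map f = ⊥ := (Subgroup.map_eq_bot_iff _).mpr (by
      rw [hfdef, QuotientGroup.ker_mk'])
    rw [h4, sup_bot_eq]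
  obtain ⟨S, hQS⟩ := hQp.exists_le_sylow
  have hSmap : (S : Subgroup G).map f = P := by
    have h1 : IsPGroup p ((S : Subgroup G).map f) := S.2.map f
    have h2 : (P : Subgroup (G ⧸ N)) ≤ (S : Subgroup G).map f := hQmap ▸ Subgroup.map_mono hQS
    exact P.3 h1 h2
  have h5 := kSubmodularIn_map hfsurj (hG p S)
  rwa [hSmap] at h5
end
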